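/- Let (G,·,▷,Φ) be a twisted post group with sub-adjacent operation ∘, let G_1 = Φ(G) (a group under ∘ with identity e_1) and K = {e_a | a∈G}. Define * on G_1 × K by (a_1,e_{b_1})*(a_2,e_{b_2}) = (a_1∘a_2, e_{b_2}). Then the map Ψ(a) = (a∘e_1, e_a) is a semigroup isomorphism from (G,∘) onto (G_1 × K, *). -/

import Mathlib

/-!
Every `e_a` is a left unit for `∘` that is killed by `Φ`, and `e_{a ∘ b} = e_b`. Hence
`a = (a ∘ e_1) ∘ e_a`, so `Ψ` is injective; `Φ(G)` is exactly the set of `x` with `x ∘ e_1 = x`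
(one inclusion because `e_{Φ(u)} = e_{u ∘ 1} = e_1`, the other because `Φ(a ∘ 1†) = a ∘ e_1`),
which gives the image; and `Ψ` is multiplicative because `e_1 ∘ (b ∘ e_1) = b ∘ e_1`.
-/

/-- A (left) twisted post group: a group `G` with a binary operation `tri` (written `▷`)
and a cocycle `phi` such that each left multiplication `tri a` is a group automorphism,
`(a ∘ b) ▷ c = a ▷ (b ▷ c)` and `Φ(a ∘ b) = a ∘ Φ(b)`, where `a ∘ b = Φ(a)·(a ▷ b)`. -/
structure TPG (G : Type*) [Group G] where
  tri : G → G → G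
  phi : G → G
  tri_mul : ∀ a b c : G, tri a (b * c) = tri a b * tri a c
  tri_bij : ∀ a : G, Function.Bijective (tri a)
  tri_assoc : ∀ a b c : G, tri (phi a * tri a b) c = tri a (tri b c)
  phi_comp : ∀ a b : G, phi (phi a * tri a b) = phi a * tri a (phi b)

namespace TPG

variable {G : Type*} [Group G] (T : TPG G)

/-- The sub-adjacent operation `a ∘ b = Φ(a)·(a ▷ b)`. -/
def circ (a b : G) : G := T.phi a * T.tri a b

/-- `e_a = (L_a^▷)⁻¹(Φ(a)⁻¹·a)`. -/
noncomputable def e (a : G) : G := Function.invFun (T.tri a) ((T.phi a)⁻¹ * a)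

/-- `a† = (L_a^▷)⁻¹(Φ(a)⁻¹·e_a)`. -/
noncomputable def dag (a : G) : G := Function.invFun (T.tri a) ((T.phi a)⁻¹ * T.e a)

def triHom (a : G) : G →* G := MonoidHom.mk' (T.tri a) (T.tri_mul a)

lemma tri_one (a : G) : T.tri a 1 = 1 := (T.triHom a).map_one

lemma tri_inv (a b : G) : T.tri a b⁻¹ = (T.tri a b)⁻¹ := (T.triHom a).map_inv b

lemma tri_injective (a : G) : Function.Injective (T.tri a) := (T.tri_bij a).injective

lemma tri_e (a : G) : T.tri a (T.e a) = (T.phi a)⁻¹ * a :=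
  Function.invFun_eq ((T.tri_bij a).surjective _)

lemma tri_dag (a : G) : T.tri a (T.dag a) = (T.phi a)⁻¹ * T.e a :=
  Function.invFun_eq ((T.tri_bij a).surjective _)

lemma tri_circ (a b c : G) : T.tri (T.circ a b) c = T.tri a (T.tri b c) := T.tri_assoc a b c

lemma phi_circ (a b : G) : T.phi (T.circ a b) = T.circ a (T.phi b) := T.phi_comp a b

lemma phi_eq_circ_one (a : G) : T.phi a = T.circ a 1 := by
  rw [circ, tri_one, mul_one]

lemma circ_e (a : G) : T.circ a (T.e a) = a := by
  rw [circ, tri_e, mul_inv_cancel_left]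

lemma circ_dag (a : G) : T.circ a (T.dag a) = T.e a := by
  rw [circ, tri_dag, mul_inv_cancel_left]

lemma circ_assoc (a b c : G) : T.circ (T.circ a b) c = T.circ a (T.circ b c) := by
  rw [circ, phi_circ, tri_circ, circ, circ, circ, mul_assoc, T.tri_mul]

lemma tri_e_left (a c : G) : T.tri (T.e a) c = c := by
  have h := T.tri_circ a (T.e a) c
  rw [circ_e] at h
  exact (T.tri_injective a h).symm

lemma phi_e (a : G) : T.phi (T.e a) = 1 := by
  have h := T.phi_circ a (T.e a)
  rw [circ_e, circ, left_eq_mul, ← T.tri_one a] at h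
  exact T.tri_injective a h

lemma circ_e_left (a c : G) : T.circ (T.e a) c = c := by
  rw [circ, phi_e, tri_e_left, one_mul]

lemma e_circ (a b : G) : T.e (T.circ a b) = T.e b := by
  apply T.tri_injective (T.circ a b)
  rw [tri_e, tri_circ, tri_e, T.tri_mul, tri_inv, phi_circ, circ, circ, mul_inv_rev]
  group

lemma e_e (a : G) : T.e (T.e a) = T.e a := by
  simpa only [circ_e] using (T.e_circ a (T.e a)).symm

lemma phi_dag_one : T.phi (T.dag 1) = T.e 1 := by
  have h := T.phi_circ 1 (T.dag 1)
  rw [circ_dag, phi_e, circ, eq_comm, mul_eq_one_iff_inv_eq] at h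
  apply T.tri_injective 1
  rw [← h, tri_e, mul_one]

lemma circ_e_one_circ_e (a : G) : T.circ (T.circ a (T.e 1)) (T.e a) = a := by
  rw [circ_assoc, circ_e_left, circ_e]

lemma circ_e_one_eq_self_iff (x : G) : T.circ x (T.e 1) = x ↔ x ∈ Set.range T.phi := by
  constructor
  · intro hx
    refine ⟨T.circ x (T.dag 1), ?_⟩
    rw [phi_circ, phi_dag_one, hx]
  · rintro ⟨u, rfl⟩
    have he : T.e (T.phi u) = T.e 1 := by rw [phi_eq_circ_one, e_circ]
    rw [← he, circ_e]

noncomputable def psi (a : G) : G × G := (T.circ a (T.e 1), T.e a)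

lemma psi_injective : Function.Injective T.psi := by
  intro a b h
  rw [← T.circ_e_one_circ_e a, ← T.circ_e_one_circ_e b]
  exact congrArg₂ T.circ (congrArg Prod.fst h) (congrArg Prod.snd h)

lemma range_psi : Set.range T.psi = Set.range T.phi ×ˢ Set.range T.e := by
  ext ⟨x, y⟩
  simp only [psi, Set.mem_range, Set.mem_prod, Prod.mk.injEq]
  constructor
  · rintro ⟨a, rfl, rfl⟩
    exact ⟨(T.circ_e_one_eq_self_iff _).1 (by rw [circ_assoc, circ_e_left]), a, rfl⟩
  · rintro ⟨hx, v, rfl⟩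
    refine ⟨T.circ x (T.e v), ?_, by rw [e_circ, e_e]⟩
    rw [circ_assoc, circ_e_left, (T.circ_e_one_eq_self_iff x).2 hx]

lemma psi_circ (a b : G) :
    T.psi (T.circ a b) = (T.circ (T.psi a).1 (T.psi b).1, (T.psi b).2) := by
  simp only [psi, Prod.mk.injEq, e_circ, and_true]
  rw [circ_assoc, circ_assoc, circ_e_left]

end TPG

/-- The map `Ψ(a) = (a ∘ e_1, e_a)` is a semigroup isomorphism from `(G, ∘)` onto
`(G_1 ⊕ K, *)` where `(a₁, e_{b₁}) * (a₂, e_{b₂}) = (a₁ ∘ a₂, e_{b₂})`,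
with `G_1 = Φ(G)` and `K = {e_a | a ∈ G}`. -/
theorem decomposition {G : Type*} [Group G] (T : TPG G) :
    Function.Injective (fun a : G => (T.circ a (T.e 1), T.e a)) ∧
    Set.range (fun a : G => (T.circ a (T.e 1), T.e a)) =
      (Set.range T.phi) ×ˢ (Set.range T.e) ∧
    (∀ a b : G,
      (T.circ (T.circ a b) (T.e 1), T.e (T.circ a b)) =
        (T.circ (T.circ a (T.e 1)) (T.circ b (T.e 1)), T.e b)) :=
  ⟨T.psi_injective, T.range_psi, T.psi_circ⟩
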